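/- Let C ⊆ ℝ^m and D ⊆ ℝ^n be nonzero closed convex cones and A ∈ ℝ^{n×m}. (i) If AᵀA = I_m (so n ≥ m), then ‖A‖_{C→D} = cos d̄(AC, D) and σ_{C→D}(A) = sin d̄(AC, D°); in particular σ_{C→D}(A)² = 1 − (‖A‖_{C→D°})². (ii) If AAᵀ = I_n (so n ≤ m), then ‖A‖_{C→D} = cos d̄(C, AᵀD) and σ_{C→D}(A) = sin d̄(C, (AᵀD)°). -/

import Mathlib

open MeasureTheory ProbabilityTheory Metric Set
open scoped InnerProductSpace
open scoped Classical
open scoped Pointwise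

noncomputable section

/-- Euclidean space `ℝ^k`. -/
abbrev Euc (k : ℕ) : Type := EuclideanSpace ℝ (Fin k)

/-- The linear action of a matrix `A ∈ ℝ^{n×m}` on Euclidean space, `x ↦ Ax`. -/
def mulE {m n : ℕ} (A : Matrix (Fin n) (Fin m) ℝ) (x : Euc m) : Euc n :=
  Matrix.toEuclideanLin A x

/-- The metric projection onto a set `S`: the point of `S` closest to `y`
(if a unique closest point characterizing property holds; junk value `0` otherwise). -/
def metricProj {k : ℕ} (S : Set (Euc k)) (y : Euc k) : Euc k :=
  if h : ∃ z, z ∈ S ∧ ∀ w ∈ S, dist y z ≤ dist y w then h.choose else 0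

/-- `C` is a closed convex cone (containing the origin). -/
def IsClosedConvexCone {k : ℕ} (C : Set (Euc k)) : Prop :=
  IsClosed C ∧ Convex ℝ C ∧ (∀ c : ℝ, 0 ≤ c → ∀ x ∈ C, c • x ∈ C) ∧ (0 : Euc k) ∈ C

/-- The polar cone `S° = {z | ⟨x,z⟩ ≤ 0 ∀ x ∈ S}`. -/
def polarCone {k : ℕ} (S : Set (Euc k)) : Set (Euc k) :=
  {z | ∀ x ∈ S, ⟪x, z⟫_ℝ ≤ 0}

/-- The restricted norm `‖A‖_{C→D} = max_{x ∈ C ∩ S^{m-1}} ‖Proj_D (Ax)‖`. -/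
def resNorm {m n : ℕ} (C : Set (Euc m)) (D : Set (Euc n)) (A : Matrix (Fin n) (Fin m) ℝ) : ℝ :=
  sSup ((fun x => ‖metricProj D (mulE A x)‖) '' (C ∩ sphere 0 1))

/-- The restricted singular value `σ_{C→D}(A) = min_{x ∈ C ∩ S^{m-1}} ‖Proj_D (Ax)‖`. -/
def resSval {m n : ℕ} (C : Set (Euc m)) (D : Set (Euc n)) (A : Matrix (Fin n) (Fin m) ℝ) : ℝ :=
  sInf ((fun x => ‖metricProj D (mulE A x)‖) '' (C ∩ sphere 0 1))

/-- The restricted norm for arbitrary (not necessarily closed) cones: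
`‖B‖_{K→K'} = sup { ⟨Bx, y⟩ : x ∈ K ∩ B^ℓ, y ∈ K' ∩ B^p }`. -/
def resNormGen {l p : ℕ} (K : Set (Euc l)) (K' : Set (Euc p))
    (B : Matrix (Fin p) (Fin l) ℝ) : ℝ :=
  sSup (Set.image2 (fun x y => ⟪mulE B x, y⟫_ℝ) (K ∩ closedBall 0 1) (K' ∩ closedBall 0 1))

/-- The operator (spectral) norm of a matrix. -/
def opNorm {m n : ℕ} (A : Matrix (Fin n) (Fin m) ℝ) : ℝ :=
  ‖LinearMap.toContinuousLinearMap (Matrix.toEuclideanLin A)‖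

/-- The standard Gaussian measure on `ℝ^k` (i.i.d. N(0,1) coordinates). -/
def stdGaussianE (k : ℕ) : Measure (Euc k) :=
  Measure.map (⇑(EuclideanSpace.equiv (Fin k) ℝ).symm)
    (Measure.pi fun _ : Fin k => gaussianReal 0 1)

/-- The standard Gaussian measure on `n × m` arrays (i.i.d. N(0,1) entries). -/
def stdGaussianPi (n m : ℕ) : Measure (Fin n → Fin m → ℝ) :=
  Measure.pi fun _ : Fin n => Measure.pi fun _ : Fin m => gaussianReal 0 1

/-- The support function `h_K(x) = sup_{z ∈ K} ⟨x, z⟩`. -/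
def suppFn {k : ℕ} (K : Set (Euc k)) (x : Euc k) : ℝ := sSup ((fun z => ⟪x, z⟫_ℝ) '' K)

/-- The capped-angle cosine `cos d̄(X,Y) = max{⟨x,y⟩ : x ∈ X ∩ B, y ∈ Y ∩ B}`. -/
def cosAng {k : ℕ} (X Y : Set (Euc k)) : ℝ :=
  sSup (Set.image2 (fun x y => ⟪x, y⟫_ℝ) (X ∩ closedBall 0 1) (Y ∩ closedBall 0 1))

/-- `sin d̄(X,Y) = √(1 - cos d̄(X,Y)²)`. -/
def sinAng {k : ℕ} (X Y : Set (Euc k)) : ℝ := Real.sqrt (1 - cosAng X Y ^ 2)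

/-- The Kronecker (tensor) product `x ⊗ y ∈ ℝ^{mn}`. -/
def kron {m n : ℕ} (x : Euc m) (y : Euc n) : EuclideanSpace ℝ (Fin m × Fin n) :=
  (EuclideanSpace.equiv (Fin m × Fin n) ℝ).symm (fun p => x p.1 * y p.2)

/-- The primal feasible set `𝒫(C,D) = {A | ∃ x ∈ C \ {0}, Ax ∈ D°}`. -/
def primalSet {m n : ℕ} (C : Set (Euc m)) (D : Set (Euc n)) :
    Set (Matrix (Fin n) (Fin m) ℝ) :=
  {A | ∃ x ∈ C, x ≠ 0 ∧ mulE A x ∈ polarCone D}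

/-- The dual feasible set `𝒟(C,D) = {A | ∃ y ∈ D \ {0}, -Aᵀy ∈ C°}`. -/
def dualSet {m n : ℕ} (C : Set (Euc m)) (D : Set (Euc n)) :
    Set (Matrix (Fin n) (Fin m) ℝ) :=
  {A | ∃ y ∈ D, y ≠ 0 ∧ -(mulE A.transpose y) ∈ polarCone C}

/-- `K₂` is a `0`-contraction of `K₁`: there are generating sets `M₁` of `K₁`, `M₂` of `K₂`
(i.e. `Kᵢ` is the closed convex hull of `Mᵢ`) and a surjection `φ : M₁ → M₂` that is
`1`-Lipschitz and norm-nonincreasing. -/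
def IsZeroContractionOf {E₁ E₂ : Type*} [NormedAddCommGroup E₁] [NormedSpace ℝ E₁]
    [NormedAddCommGroup E₂] [NormedSpace ℝ E₂] (K₁ : Set E₁) (K₂ : Set E₂) : Prop :=
  ∃ (M₁ : Set E₁) (M₂ : Set E₂) (φ : E₁ → E₂),
    closure (convexHull ℝ M₁) = K₁ ∧ closure (convexHull ℝ M₂) = K₂ ∧
    φ '' M₁ = M₂ ∧
    (∀ x ∈ M₁, ∀ x' ∈ M₁, ‖φ x - φ x'‖ ≤ ‖x - x'‖) ∧
    (∀ x ∈ M₁, ‖φ x‖ ≤ ‖x‖)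

/-- The pair `(x, y)` regarded as an element of the Euclidean (ℓ²) product. -/
def pairL2 {m n : ℕ} (x : Euc m) (y : Euc n) : WithLp 2 (Euc m × Euc n) :=
  (WithLp.equiv 2 (Euc m × Euc n)).symm (x, y)

/-- The product `K × K'` as a subset of the Euclidean (ℓ²) product space. -/
def prodL2 {m n : ℕ} (K : Set (Euc m)) (K' : Set (Euc n)) : Set (WithLp 2 (Euc m × Euc n)) :=
  {q | ((WithLp.equiv 2 (Euc m × Euc n)) q).1 ∈ K ∧ ((WithLp.equiv 2 (Euc m × Euc n)) q).2 ∈ K'}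



section ProofHelpers

variable {k : ℕ}

lemma isCCC_polarCone (S : Set (Euc k)) : IsClosedConvexCone (polarCone S) := by
  refine ⟨?_, ?_, ?_, ?_⟩
  · have : polarCone S = ⋂ x ∈ S, {z : Euc k | ⟪x, z⟫_ℝ ≤ 0} := by
      ext z; simp [polarCone]
    rw [this]
    exact isClosed_biInter fun x _ =>
      isClosed_le (Continuous.inner continuous_const continuous_id) continuous_const
  · intro z₁ hz₁ z₂ hz₂ a b ha hb hab
    intro x hx
    have h1 := hz₁ x hx
    have h2 := hz₂ x hx
    rw [inner_add_right, real_inner_smul_right, real_inner_smul_right]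
    nlinarith
  · intro c hc z hz x hx
    rw [real_inner_smul_right]
    exact mul_nonpos_of_nonneg_of_nonpos hc (hz x hx)
  · intro x hx; simp

lemma cone_add_mem {K : Set (Euc k)} (hK : IsClosedConvexCone K) {a b : Euc k}
    (ha : a ∈ K) (hb : b ∈ K) : a + b ∈ K := by
  have hmid : (1/2 : ℝ) • a + (1/2 : ℝ) • b ∈ K :=
    hK.2.1 ha hb (by norm_num) (by norm_num) (by norm_num)
  have h2 := hK.2.2.1 2 (by norm_num) _ hmid
  have : (2:ℝ) • ((1/2 : ℝ) • a + (1/2 : ℝ) • b) = a + b := by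
    rw [smul_add, smul_smul, smul_smul]; norm_num
  rwa [this] at h2

lemma exists_sphere_mem {C : Set (Euc k)} (hC : IsClosedConvexCone C) (hCne : C ≠ {0}) :
    ∃ x, x ∈ C ∩ sphere 0 1 := by
  have : ∃ x ∈ C, x ≠ 0 := by
    by_contra h
    push_neg at h
    apply hCne
    ext x
    simp only [Set.mem_singleton_iff]
    exact ⟨fun hx => by by_contra hne; exact hne (h x hx), fun hx => hx ▸ hC.2.2.2⟩
  obtain ⟨x, hx, hxne⟩ := this
  refine ⟨‖x‖⁻¹ • x, hC.2.2.1 _ (inv_nonneg.mpr (norm_nonneg x)) _ hx, ?_⟩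
  rw [mem_sphere_zero_iff_norm, norm_smul, norm_inv, norm_norm]
  field_simp [norm_ne_zero_iff.mpr hxne]

lemma metricProj_spec {S : Set (Euc k)} (hne : S.Nonempty) (hcl : IsClosed S)
    (hco : Convex ℝ S) (y : Euc k) :
    metricProj S y ∈ S ∧ ∀ w ∈ S, dist y (metricProj S y) ≤ dist y w := by
  have hex : ∃ z, z ∈ S ∧ ∀ w ∈ S, dist y z ≤ dist y w := by
    obtain ⟨v, hv, hveq⟩ := exists_norm_eq_iInf_of_complete_convex hne hcl.isComplete hco y
    refine ⟨v, hv, fun w hw => ?_⟩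
    rw [dist_eq_norm, dist_eq_norm, hveq]
    exact ciInf_le ⟨0, by rintro _ ⟨w, rfl⟩; exact norm_nonneg _⟩ (⟨w, hw⟩ : S)
  rw [metricProj, dif_pos hex]
  exact hex.choose_spec

lemma metricProj_inner_le_of_mem {S : Set (Euc k)} (hne : S.Nonempty) (hcl : IsClosed S)
    (hco : Convex ℝ S) (y : Euc k) :
    ∀ w ∈ S, ⟪y - metricProj S y, w - metricProj S y⟫_ℝ ≤ 0 := by
  obtain ⟨hp, hmin⟩ := metricProj_spec hne hcl hco y
  set p := metricProj S y with hpdef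
  haveI : Nonempty S := ⟨⟨p, hp⟩⟩
  have heq : ‖y - p‖ = ⨅ w : S, ‖y - w‖ := by
    apply le_antisymm
    · exact le_ciInf fun w => by simpa [dist_eq_norm] using hmin w w.2
    · exact ciInf_le ⟨0, by rintro _ ⟨w, rfl⟩; exact norm_nonneg _⟩ (⟨p, hp⟩ : S)
  exact (norm_eq_iInf_iff_real_inner_le_zero hco hp).mp heq

lemma ccc_spec {K : Set (Euc k)} (hK : IsClosedConvexCone K) (y : Euc k) :
    metricProj K y ∈ K ∧ ∀ w ∈ K, dist y (metricProj K y) ≤ dist y w :=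
  metricProj_spec ⟨0, hK.2.2.2⟩ hK.1 hK.2.1 y

lemma proj_cone_inner_le {K : Set (Euc k)} (hK : IsClosedConvexCone K) (y : Euc k) :
    ∀ w ∈ K, ⟪y - metricProj K y, w⟫_ℝ ≤ 0 := by
  intro w hw
  have hp := (ccc_spec hK y).1
  have h := metricProj_inner_le_of_mem ⟨0, hK.2.2.2⟩ hK.1 hK.2.1 y
    (metricProj K y + w) (cone_add_mem hK hp hw)
  simpa using h

lemma proj_cone_inner_self {K : Set (Euc k)} (hK : IsClosedConvexCone K) (y : Euc k) :
    ⟪y - metricProj K y, metricProj K y⟫_ℝ = 0 := by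
  have hp := (ccc_spec hK y).1
  have h1 : ⟪y - metricProj K y, metricProj K y⟫_ℝ ≤ 0 :=
    proj_cone_inner_le hK y _ hp
  have h0 := metricProj_inner_le_of_mem ⟨0, hK.2.2.2⟩ hK.1 hK.2.1 y 0 hK.2.2.2
  rw [zero_sub, inner_neg_right] at h0
  linarith

lemma proj_norm_isGreatest {K : Set (Euc k)} (hK : IsClosedConvexCone K) (y : Euc k) :
    IsGreatest ((fun z => ⟪y, z⟫_ℝ) '' (K ∩ closedBall 0 1)) ‖metricProj K y‖ := by
  set p := metricProj K y with hpdef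
  have hp := (ccc_spec hK y).1
  have hself := proj_cone_inner_self hK y
  have hyp : ⟪y, p⟫_ℝ = ‖p‖ ^ 2 := by
    have : ⟪y - p, p⟫_ℝ = ⟪y, p⟫_ℝ - ⟪p, p⟫_ℝ := inner_sub_left y p p
    rw [hself] at this
    rw [← real_inner_self_eq_norm_sq]
    linarith
  constructor
  · by_cases hp0 : p = 0
    · exact ⟨0, ⟨hK.2.2.2, mem_closedBall_self zero_le_one⟩, by simp [hp0]⟩
    · refine ⟨‖p‖⁻¹ • p, ⟨hK.2.2.1 _ (inv_nonneg.mpr (norm_nonneg p)) _ hp, ?_⟩, ?_⟩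
      · rw [mem_closedBall_zero_iff, norm_smul, norm_inv, norm_norm]
        rw [inv_mul_cancel₀ (norm_ne_zero_iff.mpr hp0)]
      · show ⟪y, ‖p‖⁻¹ • p⟫_ℝ = ‖p‖
        rw [real_inner_smul_right, hyp]
        have hpne : ‖p‖ ≠ 0 := norm_ne_zero_iff.mpr hp0
        field_simp
  · rintro r ⟨z, ⟨hzK, hzB⟩, rfl⟩
    have h1 : ⟪y - p, z⟫_ℝ ≤ 0 := proj_cone_inner_le hK y z hzK
    have h2 : ⟪p, z⟫_ℝ ≤ ‖p‖ * ‖z‖ := real_inner_le_norm p z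
    have h3 : ‖z‖ ≤ 1 := mem_closedBall_zero_iff.mp hzB
    have h4 : ⟪y, z⟫_ℝ = ⟪y - p, z⟫_ℝ + ⟪p, z⟫_ℝ := by
      rw [← inner_add_left]; norm_num
    nlinarith [norm_nonneg p]

lemma proj_norm_eq_sSup {K : Set (Euc k)} (hK : IsClosedConvexCone K) (y : Euc k) :
    ‖metricProj K y‖ = sSup ((fun z => ⟪y, z⟫_ℝ) '' (K ∩ closedBall 0 1)) :=
  ((proj_norm_isGreatest hK y).csSup_eq).symm

lemma min_unique {S : Set (Euc k)} {y p q : Euc k} (hp : p ∈ S) (hq : q ∈ S)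
    (hco : Convex ℝ S)
    (hpm : ∀ w ∈ S, dist y p ≤ dist y w) (hqm : ∀ w ∈ S, dist y q ≤ dist y w) : p = q := by
  have hmid : (1/2 : ℝ) • p + (1/2 : ℝ) • q ∈ S :=
    hco hp hq (by norm_num) (by norm_num) (by norm_num)
  set m := (1/2 : ℝ) • p + (1/2 : ℝ) • q with hm
  have h1 : dist y p ≤ dist y m := hpm m hmid
  have h2 : dist y q ≤ dist y m := hqm m hmid
  have h3 : dist y q ≤ dist y p := hqm p hp
  have h4 : dist y p ≤ dist y q := hpm q hq
  have hpar := parallelogram_law_with_norm ℝ (y - p) (y - q)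
  have e1 : y - p + (y - q) = (2:ℝ) • (y - m) := by
    rw [hm]; module
  have e2 : y - p - (y - q) = q - p := by abel
  rw [e1, e2, norm_smul] at hpar
  simp only [Real.norm_ofNat] at hpar
  have hd : ‖y - p‖ = ‖y - q‖ := by
    rw [dist_eq_norm] at h3 h4; exact le_antisymm h4 h3
  have hdm : ‖y - p‖ ≤ ‖y - m‖ := by rw [dist_eq_norm] at h1; exact h1
  have hqp : ‖q - p‖ = 0 := by nlinarith [norm_nonneg (q - p), norm_nonneg (y - p), norm_nonneg (y - m)]
  have := norm_eq_zero.mp hqp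
  have : q = p := by rwa [sub_eq_zero] at this
  exact this.symm

lemma moreau_proj {K : Set (Euc k)} (hK : IsClosedConvexCone K) (y : Euc k) :
    metricProj (polarCone K) y = y - metricProj K y := by
  set p := metricProj K y with hpdef
  have hp := (ccc_spec hK y).1
  have hKpol := isCCC_polarCone K
  have hmem : y - p ∈ polarCone K := by
    intro x hx
    rw [real_inner_comm]
    exact proj_cone_inner_le hK y x hx
  have hmin : ∀ z ∈ polarCone K, dist y (y - p) ≤ dist y z := by
    intro z hz
    have hzp : ⟪p, z⟫_ℝ ≤ 0 := hz p hp
    have hself : ⟪y - p, p⟫_ℝ = 0 := proj_cone_inner_self hK y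
    have hexp : ‖y - z‖ ^ 2 = ‖p‖ ^ 2 + 2 * ⟪p, y - p - z⟫_ℝ + ‖y - p - z‖ ^ 2 := by
      have : y - z = p + (y - p - z) := by abel
      rw [this, @norm_add_sq_real]
    have hself' : ⟪p, y - p⟫_ℝ = 0 := by rw [real_inner_comm]; exact hself
    have hin : ⟪p, y - p - z⟫_ℝ = -⟪p, z⟫_ℝ := by
      rw [inner_sub_right, hself']; ring
    have hsq : ‖p‖ ^ 2 ≤ ‖y - z‖ ^ 2 := by nlinarith [sq_nonneg (‖y - p - z‖)]
    have : ‖p‖ ≤ ‖y - z‖ := by nlinarith [norm_nonneg p, norm_nonneg (y - z)]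
    calc dist y (y - p) = ‖p‖ := by rw [dist_eq_norm]; congr 1; abel
    _ ≤ ‖y - z‖ := this
    _ = dist y z := (dist_eq_norm y z).symm
  obtain ⟨hq, hqmin⟩ := ccc_spec hKpol y
  exact min_unique hq hmem hKpol.2.1 hqmin hmin

lemma moreau_norm {K : Set (Euc k)} (hK : IsClosedConvexCone K) (y : Euc k) :
    ‖y‖ ^ 2 = ‖metricProj K y‖ ^ 2 + ‖metricProj (polarCone K) y‖ ^ 2 := by
  rw [moreau_proj hK y]
  set p := metricProj K y
  have hself : ⟪p, y - p⟫_ℝ = 0 := by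
    rw [real_inner_comm]; exact proj_cone_inner_self hK y
  have : y = p + (y - p) := by abel
  calc ‖y‖ ^ 2 = ‖p + (y - p)‖ ^ 2 := by rw [← this]
  _ = ‖p‖ ^ 2 + 2 * ⟪p, y - p⟫_ℝ + ‖y - p‖ ^ 2 := by rw [@norm_add_sq_real]
  _ = ‖p‖ ^ 2 + ‖y - p‖ ^ 2 := by rw [hself]; ring

lemma proj_norm_le {K : Set (Euc k)} (hK : IsClosedConvexCone K) (y : Euc k) :
    ‖metricProj K y‖ ≤ ‖y‖ := by
  have h := moreau_norm hK y
  nlinarith [norm_nonneg (metricProj K y), norm_nonneg y,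
    sq_nonneg (‖metricProj (polarCone K) y‖)]

/-- Main sup identity: for `C` a nonzero closed convex cone and `K` a closed convex cone,
`sup_{x ∈ C ∩ S} ‖Proj_K x‖ = cos d̄(C, K)`. -/
lemma sSup_proj_eq_cosAng {C K : Set (Euc k)} (hC : IsClosedConvexCone C) (hCne : C ≠ {0})
    (hK : IsClosedConvexCone K) :
    sSup ((fun x => ‖metricProj K x‖) '' (C ∩ sphere 0 1)) = cosAng C K := by
  obtain ⟨x₀, hx₀⟩ := exists_sphere_mem hC hCne
  have hx₀n : ‖x₀‖ = 1 := mem_sphere_zero_iff_norm.mp hx₀.2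
  set U := (fun x => ‖metricProj K x‖) '' (C ∩ sphere 0 1) with hU
  set T := Set.image2 (fun x y => ⟪x, y⟫_ℝ) (C ∩ closedBall 0 1) (K ∩ closedBall 0 1) with hT
  have hUne : U.Nonempty := ⟨_, ⟨x₀, hx₀, rfl⟩⟩
  have hTbdd : BddAbove T := by
    refine ⟨1, ?_⟩
    rintro r ⟨x, ⟨hxC, hxB⟩, y, ⟨hyK, hyB⟩, rfl⟩
    have := real_inner_le_norm x y
    have hx1 : ‖x‖ ≤ 1 := mem_closedBall_zero_iff.mp hxB
    have hy1 : ‖y‖ ≤ 1 := mem_closedBall_zero_iff.mp hyB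
    nlinarith [norm_nonneg x, norm_nonneg y]
  have hUbdd : BddAbove U := by
    refine ⟨1, ?_⟩
    rintro r ⟨x, ⟨hxC, hxS⟩, rfl⟩
    have := proj_norm_le hK x
    rw [mem_sphere_zero_iff_norm.mp hxS] at this
    exact this
  have hU0 : (0:ℝ) ≤ sSup U := by
    refine le_csSup_of_le hUbdd ⟨x₀, hx₀, rfl⟩ (norm_nonneg _)
  have hcos : cosAng C K = sSup T := rfl
  rw [hcos]
  apply le_antisymm
  · apply csSup_le hUne
    rintro r ⟨x, ⟨hxC, hxS⟩, rfl⟩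
    show ‖metricProj K x‖ ≤ sSup T
    rw [proj_norm_eq_sSup hK x]
    refine csSup_le ⟨_, ⟨0, ⟨hK.2.2.2, mem_closedBall_self zero_le_one⟩, rfl⟩⟩ ?_
    rintro r ⟨z, hz, rfl⟩
    apply le_csSup hTbdd
    exact ⟨x, ⟨hxC, sphere_subset_closedBall hxS⟩, z, hz, rfl⟩
  · refine csSup_le ⟨_, ⟨x₀, ⟨hx₀.1, sphere_subset_closedBall hx₀.2⟩, 0,
      ⟨hK.2.2.2, mem_closedBall_self zero_le_one⟩, rfl⟩⟩ ?_
    rintro r ⟨x, ⟨hxC, hxB⟩, z, ⟨hzK, hzB⟩, rfl⟩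
    show ⟪x, z⟫_ℝ ≤ sSup U
    by_cases hx0 : x = 0
    · simp only [hx0, inner_zero_left]; exact hU0
    · set xh := ‖x‖⁻¹ • x with hxh
      have hxhC : xh ∈ C := hC.2.2.1 _ (inv_nonneg.mpr (norm_nonneg x)) _ hxC
      have hxhS : xh ∈ sphere (0 : Euc k) 1 := by
        rw [mem_sphere_zero_iff_norm, hxh, norm_smul, norm_inv, norm_norm,
          inv_mul_cancel₀ (norm_ne_zero_iff.mpr hx0)]
      have hproj : ⟪xh, z⟫_ℝ ≤ ‖metricProj K xh‖ :=
        (proj_norm_isGreatest hK xh).2 ⟨z, ⟨hzK, hzB⟩, rfl⟩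
      have hmem : ‖metricProj K xh‖ ≤ sSup U := le_csSup hUbdd ⟨xh, ⟨hxhC, hxhS⟩, rfl⟩
      have hxz : ⟪x, z⟫_ℝ = ‖x‖ * ⟪xh, z⟫_ℝ := by
        rw [hxh, real_inner_smul_left]
        field_simp [norm_ne_zero_iff.mpr hx0]
      rw [hxz]
      have hx1 : ‖x‖ ≤ 1 := mem_closedBall_zero_iff.mp hxB
      by_cases hs : ⟪xh, z⟫_ℝ ≤ 0
      · have : ‖x‖ * ⟪xh, z⟫_ℝ ≤ 0 := mul_nonpos_of_nonneg_of_nonpos (norm_nonneg x) hs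
        linarith
      · push_neg at hs
        nlinarith [norm_nonneg x]

lemma cosAng_le_one {X Y : Set (Euc k)} (h0X : (0:Euc k) ∈ X) (h0Y : (0:Euc k) ∈ Y) :
    cosAng X Y ≤ 1 := by
  unfold cosAng
  refine csSup_le ⟨0, 0, ⟨h0X, mem_closedBall_self zero_le_one⟩, 0,
    ⟨h0Y, mem_closedBall_self zero_le_one⟩, by simp⟩ ?_
  rintro r ⟨x, ⟨hxX, hxB⟩, y, ⟨hyY, hyB⟩, rfl⟩
  have := real_inner_le_norm x y
  have hx1 : ‖x‖ ≤ 1 := mem_closedBall_zero_iff.mp hxB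
  have hy1 : ‖y‖ ≤ 1 := mem_closedBall_zero_iff.mp hyB
  nlinarith [norm_nonneg x, norm_nonneg y]

lemma cosAng_nonneg {X Y : Set (Euc k)} (h0X : (0:Euc k) ∈ X) (h0Y : (0:Euc k) ∈ Y) :
    0 ≤ cosAng X Y := by
  unfold cosAng
  have hbdd : BddAbove (Set.image2 (fun x y => ⟪x, y⟫_ℝ) (X ∩ closedBall 0 1)
      (Y ∩ closedBall 0 1)) := by
    refine ⟨1, ?_⟩
    rintro r ⟨x, ⟨hxX, hxB⟩, y, ⟨hyY, hyB⟩, rfl⟩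
    have := real_inner_le_norm x y
    have hx1 : ‖x‖ ≤ 1 := mem_closedBall_zero_iff.mp hxB
    have hy1 : ‖y‖ ≤ 1 := mem_closedBall_zero_iff.mp hyB
    nlinarith [norm_nonneg x, norm_nonneg y]
  refine le_csSup_of_le hbdd ⟨0, ⟨h0X, mem_closedBall_self zero_le_one⟩, 0,
    ⟨h0Y, mem_closedBall_self zero_le_one⟩, rfl⟩ (by simp)

lemma sInf_sqrt_image {T : Set ℝ} (hne : T.Nonempty) (hT : T ⊆ Set.Icc 0 1) :
    sInf ((fun t => Real.sqrt (1 - t^2)) '' T) = Real.sqrt (1 - (sSup T)^2) := by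
  have hbdd : BddAbove T := ⟨1, fun t ht => (hT ht).2⟩
  set s := sSup T with hs
  obtain ⟨t₀, ht₀⟩ := hne
  have hne : T.Nonempty := ⟨t₀, ht₀⟩
  have hs0 : 0 ≤ s := le_trans (hT ht₀).1 (le_csSup hbdd ht₀)
  have hs1 : s ≤ 1 := csSup_le hne fun t ht => (hT ht).2
  apply le_antisymm
  · apply le_of_forall_pos_le_add
    intro ε hε
    have hcont : ContinuousAt (fun t : ℝ => Real.sqrt (1 - t^2)) s := by
      apply Real.continuous_sqrt.continuousAt.comp
      fun_prop
    rw [Metric.continuousAt_iff] at hcont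
    obtain ⟨δ, hδ, hcont⟩ := hcont ε hε
    obtain ⟨t, ht, hts⟩ : ∃ t ∈ T, s - δ < t := exists_lt_of_lt_csSup hne (by linarith)
    have htle : t ≤ s := le_csSup hbdd ht
    have hdist : dist t s < δ := by
      rw [Real.dist_eq, abs_lt]; constructor <;> linarith
    have h := hcont hdist
    rw [Real.dist_eq, abs_lt] at h
    calc sInf ((fun t => Real.sqrt (1 - t^2)) '' T) ≤ Real.sqrt (1 - t^2) :=
      csInf_le ⟨0, by rintro _ ⟨u, hu, rfl⟩; exact Real.sqrt_nonneg _⟩ ⟨t, ht, rfl⟩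
    _ ≤ Real.sqrt (1 - s^2) + ε := by linarith [h.2]
  · refine le_csInf ⟨_, ⟨t₀, ht₀, rfl⟩⟩ ?_
    rintro r ⟨t, ht, rfl⟩
    apply Real.sqrt_le_sqrt
    have h1 := (hT ht).1
    have h2 := le_csSup hbdd ht
    nlinarith

/-- Main inf identity. -/
lemma sInf_proj_eq_sinAng {C K : Set (Euc k)} (hC : IsClosedConvexCone C) (hCne : C ≠ {0})
    (hK : IsClosedConvexCone K) :
    sInf ((fun x => ‖metricProj K x‖) '' (C ∩ sphere 0 1)) = sinAng C (polarCone K) := by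
  have hKpol := isCCC_polarCone K
  set g := fun x => ‖metricProj (polarCone K) x‖ with hg
  have himg : (fun x => ‖metricProj K x‖) '' (C ∩ sphere 0 1) =
      (fun t => Real.sqrt (1 - t^2)) '' (g '' (C ∩ sphere 0 1)) := by
    rw [Set.image_image]
    apply Set.image_congr
    intro x hx
    have hxn : ‖x‖ = 1 := mem_sphere_zero_iff_norm.mp hx.2
    have hmo := moreau_norm hK x
    rw [hxn] at hmo
    have hnn : (0:ℝ) ≤ ‖metricProj K x‖ := norm_nonneg _
    have : Real.sqrt (1 - g x ^ 2) = Real.sqrt (‖metricProj K x‖ ^ 2) := by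
      congr 1; rw [hg]; simp only []; nlinarith
    rw [this, Real.sqrt_sq hnn]
  rw [himg]
  have hgne : (g '' (C ∩ sphere 0 1)).Nonempty := by
    obtain ⟨x₀, hx₀⟩ := exists_sphere_mem hC hCne
    exact ⟨_, ⟨x₀, hx₀, rfl⟩⟩
  have hgT : g '' (C ∩ sphere 0 1) ⊆ Set.Icc 0 1 := by
    rintro _ ⟨x, ⟨hxC, hxS⟩, rfl⟩
    refine ⟨norm_nonneg _, ?_⟩
    have := proj_norm_le hKpol x
    rwa [mem_sphere_zero_iff_norm.mp hxS] at this
  rw [sInf_sqrt_image hgne hgT]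
  rw [show g '' (C ∩ sphere 0 1) = (fun x => ‖metricProj (polarCone K) x‖) '' (C ∩ sphere 0 1) from rfl]
  rw [sSup_proj_eq_cosAng hC hCne hKpol]
  rfl

/- Matrix helper lemmas -/

lemma inner_mulE {m n : ℕ} (A : Matrix (Fin n) (Fin m) ℝ) (x : Euc m) (y : Euc n) :
    ⟪mulE A x, y⟫_ℝ = ⟪x, mulE A.transpose y⟫_ℝ := by
  simp only [mulE, Matrix.toEuclideanLin_apply, PiLp.inner_apply, RCLike.inner_apply,
    starRingEnd_apply, star_trivial, PiLp.toLp_apply,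
    Matrix.mulVec, dotProduct, Matrix.transpose_apply]
  simp_rw [Finset.sum_mul, Finset.mul_sum]
  rw [Finset.sum_comm]
  apply Finset.sum_congr rfl
  intro i _
  apply Finset.sum_congr rfl
  intro j _
  ring

lemma mulE_comp {m n p : ℕ} (A : Matrix (Fin n) (Fin m) ℝ) (B : Matrix (Fin m) (Fin p) ℝ)
    (x : Euc p) : mulE A (mulE B x) = mulE (A * B) x := by
  simp [mulE, Matrix.toEuclideanLin_apply, Matrix.mulVec_mulVec]

lemma mulE_one {m : ℕ} (x : Euc m) : mulE (1 : Matrix (Fin m) (Fin m) ℝ) x = x := by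
  simp [mulE, Matrix.toEuclideanLin_apply]

lemma mulE_smul {m n : ℕ} (A : Matrix (Fin n) (Fin m) ℝ) (c : ℝ) (x : Euc m) :
    mulE A (c • x) = c • mulE A x := map_smul (Matrix.toEuclideanLin A) c x

lemma mulE_zero {m n : ℕ} (A : Matrix (Fin n) (Fin m) ℝ) :
    mulE A (0 : Euc m) = 0 := map_zero (Matrix.toEuclideanLin A)

lemma norm_mulE_of_iso {m n : ℕ} {A : Matrix (Fin n) (Fin m) ℝ}
    (h : A.transpose * A = 1) (x : Euc m) : ‖mulE A x‖ = ‖x‖ := by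
  have hin : ⟪mulE A x, mulE A x⟫_ℝ = ⟪x, x⟫_ℝ := by
    rw [inner_mulE, mulE_comp, h, mulE_one]
  have h1 : ‖mulE A x‖ ^ 2 = ‖x‖ ^ 2 := by
    rw [← real_inner_self_eq_norm_sq, ← real_inner_self_eq_norm_sq, hin]
  nlinarith [norm_nonneg (mulE A x), norm_nonneg x,
    sq_abs ‖mulE A x‖]

lemma isCCC_image {m n : ℕ} {C : Set (Euc m)} (hC : IsClosedConvexCone C)
    {A : Matrix (Fin n) (Fin m) ℝ} (hiso : ∀ x, ‖mulE A x‖ = ‖x‖) :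
    IsClosedConvexCone (mulE A '' C) := by
  have hisom : Isometry (mulE A) := by
    apply AddMonoidHomClass.isometry_of_norm (Matrix.toEuclideanLin A)
    exact hiso
  refine ⟨?_, ?_, ?_, ?_⟩
  · exact hisom.isClosedEmbedding.isClosedMap _ hC.1
  · exact hC.2.1.linear_image (Matrix.toEuclideanLin A)
  · rintro c hc _ ⟨x, hx, rfl⟩
    exact ⟨c • x, hC.2.2.1 c hc x hx, mulE_smul A c x⟩
  · exact ⟨0, hC.2.2.2, mulE_zero A⟩

lemma image_ne_zero {m n : ℕ} {C : Set (Euc m)} (hC : IsClosedConvexCone C) (hCne : C ≠ {0})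
    {A : Matrix (Fin n) (Fin m) ℝ} (hiso : ∀ x, ‖mulE A x‖ = ‖x‖) :
    mulE A '' C ≠ {0} := by
  intro hcon
  obtain ⟨x₀, hx₀C, hx₀S⟩ := exists_sphere_mem hC hCne
  have : mulE A x₀ ∈ ({0} : Set (Euc n)) := hcon ▸ ⟨x₀, hx₀C, rfl⟩
  have h0 : mulE A x₀ = 0 := this
  have := hiso x₀
  rw [h0, mem_sphere_zero_iff_norm.mp hx₀S] at this
  simp at this

lemma image_inter_sphere {m n : ℕ} {S : Set (Euc m)} {A : Matrix (Fin n) (Fin m) ℝ}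
    (hiso : ∀ x, ‖mulE A x‖ = ‖x‖) :
    mulE A '' (S ∩ sphere 0 1) = (mulE A '' S) ∩ sphere 0 1 := by
  ext u
  constructor
  · rintro ⟨x, ⟨hxS, hxs⟩, rfl⟩
    exact ⟨⟨x, hxS, rfl⟩, by
      rw [mem_sphere_zero_iff_norm, hiso, ← mem_sphere_zero_iff_norm]; exact hxs⟩
  · rintro ⟨⟨x, hxS, rfl⟩, hu⟩
    refine ⟨x, ⟨hxS, ?_⟩, rfl⟩
    rw [mem_sphere_zero_iff_norm, ← hiso x, ← mem_sphere_zero_iff_norm]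
    exact hu

lemma image_inter_ball {m n : ℕ} {S : Set (Euc m)} {A : Matrix (Fin n) (Fin m) ℝ}
    (hiso : ∀ x, ‖mulE A x‖ = ‖x‖) :
    mulE A '' (S ∩ closedBall 0 1) = (mulE A '' S) ∩ closedBall 0 1 := by
  ext u
  constructor
  · rintro ⟨x, ⟨hxS, hxs⟩, rfl⟩
    exact ⟨⟨x, hxS, rfl⟩, by
      rw [mem_closedBall_zero_iff, hiso, ← mem_closedBall_zero_iff]; exact hxs⟩
  · rintro ⟨⟨x, hxS, rfl⟩, hu⟩
    refine ⟨x, ⟨hxS, ?_⟩, rfl⟩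
    rw [mem_closedBall_zero_iff, ← hiso x, ← mem_closedBall_zero_iff]
    exact hu

end ProofHelpers

/-- For nonzero closed convex cones `C ⊆ ℝ^m`, `D ⊆ ℝ^n` and `A ∈ ℝ^{n×m}`:
(i) if `AᵀA = I_m` then `‖A‖_{C→D} = cos d̄(AC,D)`, `σ_{C→D}(A) = sin d̄(AC,D°)` and
`σ_{C→D}(A)² = 1 − ‖A‖_{C→D°}²`; (ii) if `AAᵀ = I_n` then `‖A‖_{C→D} = cos d̄(C,AᵀD)` and
`σ_{C→D}(A) = sin d̄(C,(AᵀD)°)`. -/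
theorem statement7 {m n : ℕ} (C : Set (Euc m)) (D : Set (Euc n))
    (hC : IsClosedConvexCone C) (hCne : C ≠ {0})
    (hD : IsClosedConvexCone D) (hDne : D ≠ {0})
    (A : Matrix (Fin n) (Fin m) ℝ) :
    (A.transpose * A = 1 →
      resNorm C D A = cosAng (mulE A '' C) D ∧
      resSval C D A = sinAng (mulE A '' C) (polarCone D) ∧
      resSval C D A ^ 2 = 1 - resNorm C (polarCone D) A ^ 2) ∧
    (A * A.transpose = 1 →
      resNorm C D A = cosAng C (mulE A.transpose '' D) ∧
      resSval C D A = sinAng C (polarCone (mulE A.transpose '' D))) := by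
  constructor
  · intro hAtA
    have hiso : ∀ x, ‖mulE A x‖ = ‖x‖ := norm_mulE_of_iso hAtA
    have hAC : IsClosedConvexCone (mulE A '' C) := isCCC_image hC hiso
    have hACne : mulE A '' C ≠ {0} := image_ne_zero hC hCne hiso
    have himg : ∀ K : Set (Euc n),
        (fun x => ‖metricProj K (mulE A x)‖) '' (C ∩ sphere 0 1) =
        (fun u => ‖metricProj K u‖) '' ((mulE A '' C) ∩ sphere 0 1) := by
      intro K
      rw [← image_inter_sphere hiso, Set.image_image]
    have hnorm : resNorm C D A = cosAng (mulE A '' C) D := by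
      rw [resNorm, himg D, sSup_proj_eq_cosAng hAC hACne hD]
    have hsval : resSval C D A = sinAng (mulE A '' C) (polarCone D) := by
      rw [resSval, himg D, sInf_proj_eq_sinAng hAC hACne hD]
    refine ⟨hnorm, hsval, ?_⟩
    have hDpol := isCCC_polarCone D
    have hnorm' : resNorm C (polarCone D) A = cosAng (mulE A '' C) (polarCone D) := by
      rw [resNorm, himg (polarCone D), sSup_proj_eq_cosAng hAC hACne hDpol]
    rw [hsval, hnorm', sinAng]
    have hc1 : cosAng (mulE A '' C) (polarCone D) ≤ 1 :=
      cosAng_le_one hAC.2.2.2 hDpol.2.2.2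
    have hc0 : 0 ≤ cosAng (mulE A '' C) (polarCone D) :=
      cosAng_nonneg hAC.2.2.2 hDpol.2.2.2
    rw [Real.sq_sqrt (by nlinarith)]
  · intro hAAt
    have hiso : ∀ y, ‖mulE A.transpose y‖ = ‖y‖ := by
      intro y
      apply norm_mulE_of_iso
      rw [Matrix.transpose_transpose]
      exact hAAt
    have hAD : IsClosedConvexCone (mulE A.transpose '' D) := isCCC_image hD hiso
    have hkey : ∀ x : Euc m,
        ‖metricProj D (mulE A x)‖ = ‖metricProj (mulE A.transpose '' D) x‖ := by
      intro x
      have h1 := proj_norm_isGreatest hD (mulE A x)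
      have h2 := proj_norm_isGreatest hAD x
      have hseteq : (fun z => ⟪mulE A x, z⟫_ℝ) '' (D ∩ closedBall 0 1) =
          (fun z => ⟪x, z⟫_ℝ) '' ((mulE A.transpose '' D) ∩ closedBall 0 1) := by
        rw [← image_inter_ball hiso, Set.image_image]
        apply Set.image_congr
        intro z _
        exact inner_mulE A x z
      rw [hseteq] at h1
      exact h1.unique h2
    constructor
    · rw [resNorm,
        Set.image_congr (fun x _ => hkey x),
        sSup_proj_eq_cosAng hC hCne hAD]
    · rw [resSval,
        Set.image_congr (fun x _ => hkey x),
        sInf_proj_eq_sinAng hC hCne hAD]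

end
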